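/- arXiv:math/0003054 — 2 statements merged into one kernel-verified Lean document; each statement's English description precedes it below -/
import Mathlib

section
/- Fix λ, δ ∈ ℝ with δ ≠ 1, and set μ = λ + δ. For a first-order symbol T = Tⁱ ξᵢ + T⁰ with values in δ-densities, define the operator Q(T)φ = Tⁱ ∇ᵢφ + α (∇ᵢTⁱ) φ + T⁰ φ acting on λ-densities. Then Q is independent of the choice of connection within a projective equivalence class (i.e. Q computed with Γ̃ equals Q computed with Γ whenever Γ̃ⁱⱼₖ = Γⁱⱼₖ + δⁱⱼωₖ + δⁱₖωⱼ) if and only if α = λ/(1−δ). -/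
open scoped BigOperators

abbrev Pt (n : ℕ) := Fin n → ℝ
abbrev Conn (n : ℕ) := Fin n → Fin n → Fin n → Pt n → ℝ
abbrev VecF (n : ℕ) := Fin n → Pt n → ℝ
abbrev TensF (n : ℕ) := Fin n → Fin n → Pt n → ℝ

/-- partial derivative ∂ᵢ f at x -/
noncomputable def pd {n : ℕ} (f : Pt n → ℝ) (i : Fin n) (x : Pt n) : ℝ :=
  fderiv ℝ f x (Pi.single i 1)

/-- Kronecker delta -/
def kron {n : ℕ} (i j : Fin n) : ℝ := if i = j then 1 else 0

/-- trace Γᵢ = Γˡᵢₗ -/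
noncomputable def trC {n : ℕ} (Γ : Conn n) (j : Fin n) (x : Pt n) : ℝ := ∑ l, Γ l j l x

/-- symmetry of Christoffel symbols in the lower indices -/
def SymmC {n : ℕ} (Γ : Conn n) : Prop := ∀ i j k x, Γ i j k x = Γ i k j x

/-- projective equivalence: Γ̃ⁱⱼₖ = Γⁱⱼₖ + δⁱⱼωₖ + δⁱₖωⱼ -/
def ProjEq {n : ℕ} (Γ Γ' : Conn n) (ω : VecF n) : Prop :=
  ∀ i j k x, Γ' i j k x = Γ i j k x + kron i j * ω k x + kron i k * ω j x

/-- covariant derivative of a λ-density: ∇ᵢφ = ∂ᵢφ − λΓᵢφ -/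
noncomputable def covD {n : ℕ} (lam : ℝ) (Γ : Conn n) (φ : Pt n → ℝ) (i : Fin n) (x : Pt n) : ℝ :=
  pd φ i x - lam * trC Γ i x * φ x

/-- covariant derivative of a δ-weighted vector: covDV d Γ T j i = ∇ⱼTⁱ = ∂ⱼTⁱ + ΓⁱⱼₗTˡ − δΓⱼTⁱ -/
noncomputable def covDV {n : ℕ} (d : ℝ) (Γ : Conn n) (T : VecF n) (j i : Fin n) (x : Pt n) : ℝ :=
  pd (T i) j x + (∑ l, Γ i j l x * T l x) - d * trC Γ j x * T i x

/-- covariant derivative of a δ-weighted symmetric 2-tensor: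
covT d Γ T k i j = ∇ₖTⁱʲ = ∂ₖTⁱʲ + ΓⁱₗₖTˡʲ + ΓʲₗₖTⁱˡ − δΓₖTⁱʲ -/
noncomputable def covT {n : ℕ} (d : ℝ) (Γ : Conn n) (T : TensF n) (k i j : Fin n) (x : Pt n) : ℝ :=
  pd (T i j) k x + (∑ l, Γ i l k x * T l j x) + (∑ l, Γ j l k x * T i l x)
    - d * trC Γ k x * T i j x

/-- divergence ∇ⱼTⁱʲ of a δ-weighted symmetric 2-tensor -/
noncomputable def divT {n : ℕ} (d : ℝ) (Γ : Conn n) (T : TensF n) (i : Fin n) (x : Pt n) : ℝ :=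
  ∑ j, covT d Γ T j i j x

/-- second covariant derivative of a λ-density:
∇ᵢ∇ⱼφ = ∂ᵢ(∇ⱼφ) − Γᵏᵢⱼ∇ₖφ − λΓᵢ∇ⱼφ -/
noncomputable def covD2 {n : ℕ} (lam : ℝ) (Γ : Conn n) (φ : Pt n → ℝ) (i j : Fin n) (x : Pt n) : ℝ :=
  pd (covD lam Γ φ j) i x - (∑ k, Γ k i j x * covD lam Γ φ k x)
    - lam * trC Γ i x * covD lam Γ φ j x

/-- Ricci tensor Rᵢⱼ = ∂ₖΓᵏᵢⱼ − ∂ᵢΓⱼ + ΓᵏᵢⱼΓₖ − ΓˡᵢₖΓᵏⱼₗ -/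
noncomputable def ricci {n : ℕ} (Γ : Conn n) (i j : Fin n) (x : Pt n) : ℝ :=
  (∑ k, pd (Γ k i j) k x) - pd (trC Γ j) i x + (∑ k, Γ k i j x * trC Γ k x)
    - ∑ k, ∑ l, Γ l i k x * Γ k j l x

/-- smoothness of a connection -/
def SmoothC {n : ℕ} (Γ : Conn n) : Prop := ∀ i j k, ContDiff ℝ (⊤ : ℕ∞) (Γ i j k)

/-- first-order quantization map Q(T)φ = Tⁱ∇ᵢφ + α(∇ᵢTⁱ)φ + T⁰φ -/
noncomputable def Q1 {n : ℕ} (lam d a : ℝ) (Γ : Conn n) (T : VecF n) (T0 φ : Pt n → ℝ)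
    (x : Pt n) : ℝ :=
  (∑ i, T i x * covD lam Γ φ i x) + a * (∑ i, covDV d Γ T i i x) * φ x + T0 x * φ x

/-- second-order quantization map
Q(T)φ = Tⁱʲ∇ᵢ∇ⱼφ + β₁(∇ⱼTⁱʲ)∇ᵢφ + β₂(∇ᵢ∇ⱼTⁱʲ)φ + β₃RᵢⱼTⁱʲφ -/
noncomputable def Q2 {n : ℕ} (lam d b1 b2 b3 : ℝ) (Γ : Conn n) (T : TensF n) (φ : Pt n → ℝ)
    (x : Pt n) : ℝ :=
  (∑ i, ∑ j, T i j x * covD2 lam Γ φ i j x)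
    + b1 * (∑ i, divT d Γ T i x * covD lam Γ φ i x)
    + b2 * (∑ i, covDV d Γ (divT d Γ T) i i x) * φ x
    + b3 * (∑ i, ∑ j, ricci Γ i j x * T i j x) * φ x

/-- Lie derivative of a λ-density on ℝⁿ -/
noncomputable def lieD {n : ℕ} (lam : ℝ) (X : VecF n) (φ : Pt n → ℝ) (x : Pt n) : ℝ :=
  (∑ i, X i x * pd φ i x) + lam * (∑ i, pd (X i) i x) * φ x

/-- Lie derivative of a δ-weighted vector field on ℝⁿ -/
noncomputable def lieV {n : ℕ} (d : ℝ) (X : VecF n) (T : VecF n) (i : Fin n) (x : Pt n) : ℝ :=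
  (∑ j, X j x * pd (T i) j x) - (∑ j, pd (X i) j x * T j x)
    + d * (∑ j, pd (X j) j x) * T i x

/-- Lie derivative of a δ-weighted symmetric 2-tensor on ℝⁿ -/
noncomputable def lieT2 {n : ℕ} (d : ℝ) (X : VecF n) (T : TensF n) (i j : Fin n) (x : Pt n) : ℝ :=
  (∑ k, X k x * pd (T i j) k x) - (∑ k, pd (X i) k x * T k j x)
    - (∑ k, pd (X j) k x * T i k x) + d * (∑ k, pd (X k) k x) * T i j x

/-- flat first-order quantization map on ℝⁿ (zero connection) -/
noncomputable def Q1flat {n : ℕ} (a : ℝ) (T : VecF n) (T0 φ : Pt n → ℝ) (x : Pt n) : ℝ :=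
  (∑ i, T i x * pd φ i x) + a * (∑ i, pd (T i) i x) * φ x + T0 x * φ x

/-- flat second-order quantization map on ℝⁿ (zero connection) -/
noncomputable def Q2flat {n : ℕ} (b1 b2 : ℝ) (T : TensF n) (φ : Pt n → ℝ) (x : Pt n) : ℝ :=
  (∑ i, ∑ j, T i j x * pd (pd φ j) i x)
    + b1 * (∑ i, ∑ j, pd (T i j) j x * pd φ i x)
    + b2 * (∑ i, ∑ j, pd (pd (T i j) j) i x) * φ x



lemma trC_proj {n : ℕ} {Γ Γ' : Conn n} {ω : VecF n} (h : ProjEq Γ Γ' ω)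
    (j : Fin n) (x : Pt n) : trC Γ' j x = trC Γ j x + ((n : ℝ) + 1) * ω j x := by
  unfold trC
  rw [Finset.sum_congr rfl (fun l _ => h l j l x)]
  rw [Finset.sum_add_distrib, Finset.sum_add_distrib]
  have h1 : (∑ l : Fin n, kron l j * ω l x) = ω j x := by
    simp [kron, ite_mul, Finset.sum_ite_eq']
  have h2 : (∑ l : Fin n, kron l l * ω j x) = (n : ℝ) * ω j x := by
    simp [kron, Finset.sum_const, mul_comm]
  rw [h1, h2]; ring

lemma Q1_proj {n : ℕ} (lam d a : ℝ) {Γ Γ' : Conn n} {ω : VecF n} (h : ProjEq Γ Γ' ω)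
    (T : VecF n) (T0 φ : Pt n → ℝ) (x : Pt n) :
    Q1 lam d a Γ' T T0 φ x = Q1 lam d a Γ T T0 φ x
      + ((n : ℝ) + 1) * (a * (1 - d) - lam) * (∑ i, ω i x * T i x) * φ x := by
  have key1 : (∑ i, T i x * covD lam Γ' φ i x)
      = (∑ i, T i x * covD lam Γ φ i x)
        - lam * ((n : ℝ) + 1) * (∑ i, ω i x * T i x) * φ x := by
    have e : ∀ i : Fin n, T i x * covD lam Γ' φ i x
        = T i x * covD lam Γ φ i x - lam * ((n : ℝ) + 1) * (ω i x * T i x) * φ x := by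
      intro i
      simp only [covD, trC_proj h]
      ring
    rw [Finset.sum_congr rfl fun i _ => e i, Finset.sum_sub_distrib]
    congr 1
    rw [Finset.mul_sum, Finset.sum_mul]
  have key2 : (∑ i, covDV d Γ' T i i x)
      = (∑ i, covDV d Γ T i i x) + ((n : ℝ) + 1) * (1 - d) * (∑ i, ω i x * T i x) := by
    have e : ∀ i : Fin n, covDV d Γ' T i i x
        = covDV d Γ T i i x + (∑ l, ω l x * T l x) + ω i x * T i x
            - d * ((n : ℝ) + 1) * (ω i x * T i x) := by
      intro i
      simp only [covDV, trC_proj h]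
      have e2 : (∑ l, Γ' i i l x * T l x)
          = (∑ l, Γ i i l x * T l x) + (∑ l, ω l x * T l x) + ω i x * T i x := by
        simp only [h i i]
        rw [Finset.sum_congr rfl (fun l _ => by
          show (Γ i i l x + kron i i * ω l x + kron i l * ω i x) * T l x
            = Γ i i l x * T l x + ω l x * T l x + (kron i l * (ω i x * T l x))
          simp [kron]; ring_nf
          by_cases hil : i = l <;> simp [hil] <;> ring)]
        rw [Finset.sum_add_distrib, Finset.sum_add_distrib]
        congr 1
        simp [kron, ite_mul, Finset.sum_ite_eq']
      rw [e2]
      ring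
    rw [Finset.sum_congr rfl fun i _ => e i]
    rw [Finset.sum_sub_distrib, Finset.sum_add_distrib, Finset.sum_add_distrib,
      Finset.sum_const, Finset.card_univ, Fintype.card_fin, nsmul_eq_mul]
    have hfac : ∑ i : Fin n, d * ((n : ℝ) + 1) * (ω i x * T i x)
        = d * ((n : ℝ) + 1) * ∑ i, ω i x * T i x := by rw [Finset.mul_sum]
    rw [hfac]; ring
  unfold Q1
  rw [key1, key2]
  ring

theorem first_order_quantization_projectively_invariant_iff
    (n : ℕ) (hn : 1 ≤ n) (lam d a : ℝ) (hd : d ≠ 1) :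
    (∀ (Γ Γ' : Conn n) (ω : VecF n), SymmC Γ → SymmC Γ' → ProjEq Γ Γ' ω →
        ∀ (T : VecF n) (T0 φ : Pt n → ℝ) (x : Pt n),
          Q1 lam d a Γ' T T0 φ x = Q1 lam d a Γ T T0 φ x)
      ↔ a = lam / (1 - d) := by
  constructor
  · intro H
    -- concrete instantiation
    have hpe : ProjEq (fun _ _ _ _ => (0:ℝ)) (fun i j k (_ : Pt n) => kron i j + kron i k)
        (fun _ _ => (1:ℝ)) := by
      intro i j k x; ring
    have hs0 : SymmC (n := n) (fun _ _ _ _ => (0:ℝ)) := fun _ _ _ _ => rfl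
    have hs' : SymmC (fun i j k (_ : Pt n) => kron i j + kron i k) := by
      intro i j k x; exact add_comm _ _
    have hq := H _ _ _ hs0 hs' hpe (fun _ _ => 1) (fun _ => 0) (fun _ => 1) (fun _ => 0)
    have hp := Q1_proj lam d a hpe (fun _ _ => (1:ℝ)) (fun _ => (0:ℝ)) (fun _ => (1:ℝ))
      (fun _ => (0:ℝ))
    rw [hq] at hp
    have hsum : (∑ _i : Fin n, (1:ℝ) * 1) = (n : ℝ) := by simp
    rw [hsum] at hp
    have hn0 : (n : ℝ) ≠ 0 := ne_of_gt (by exact_mod_cast Nat.pos_of_ne_zero (by omega))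
    have hn1 : (n : ℝ) + 1 ≠ 0 := by positivity
    have : a * (1 - d) - lam = 0 := by
      have h2 : ((n : ℝ) + 1) * (a * (1 - d) - lam) * (n : ℝ) = 0 := by linarith
      rcases mul_eq_zero.mp h2 with h1 | h1
      · rcases mul_eq_zero.mp h1 with h3 | h3
        · exact absurd h3 hn1
        · exact h3
      · exact absurd h1 hn0
    have hd' : 1 - d ≠ 0 := by
      intro hc; apply hd; linarith
    field_simp
    linarith
  · intro ha Γ Γ' ω _ _ hpe T T0 φ x
    rw [Q1_proj lam d a hpe]
    have : a * (1 - d) - lam = 0 := by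
      have hd' : 1 - d ≠ 0 := fun hc => hd (by linarith)
      rw [ha]; field_simp; ring
    rw [this]
    ring
end

section
/- Let Γ̃, Γ be projectively equivalent symmetric connections related by ω. For the first-order quantization map Q_Γ(T)φ = Tⁱ∇ᵢφ + α(∇ᵢTⁱ)φ + T⁰φ, one has the exact transformation law Q_{Γ̃}(T)φ = Q_Γ(T)φ + (n+1)(α(1−δ) − λ) ωᵢ Tⁱ φ. -/
open scoped BigOperators

theorem first_order_quantization_transformation_law
    (n : ℕ) (lam d a : ℝ) (Γ Γ' : Conn n) (ω : VecF n)
    (hΓ : SymmC Γ) (hΓ' : SymmC Γ') (h : ProjEq Γ Γ' ω)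
    (T : VecF n) (T0 φ : Pt n → ℝ) :
    ∀ x : Pt n,
      Q1 lam d a Γ' T T0 φ x
        = Q1 lam d a Γ T T0 φ x
            + ((n : ℝ) + 1) * (a * (1 - d) - lam) * (∑ i, ω i x * T i x) * φ x := by
  intro x
  simp only [ProjEq] at h
  have htr : ∀ j : Fin n, trC Γ' j x = trC Γ j x + ((n:ℝ)+1) * ω j x := by
    intro j
    simp only [trC, h, kron]
    rw [Finset.sum_add_distrib, Finset.sum_add_distrib]
    simp [Finset.sum_ite_eq']
    ring
  have hΓ'sum : ∀ i : Fin n, (∑ l, Γ' i i l x * T l x)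
      = (∑ l, Γ i i l x * T l x) + (∑ l, ω l x * T l x) + ω i x * T i x := by
    intro i
    have hpt : ∀ l : Fin n, Γ' i i l x * T l x
        = Γ i i l x * T l x + ω l x * T l x + (if i = l then ω i x * T l x else 0) := by
      intro l
      rcases eq_or_ne i l with hil | hil
      · subst hil; simp [h, kron]; ring
      · simp [h, kron, hil]; ring
    rw [Finset.sum_congr rfl (fun l _ => hpt l)]
    rw [Finset.sum_add_distrib, Finset.sum_add_distrib]
    simp [Finset.sum_ite_eq]
  have hcd : ∀ i : Fin n, covD lam Γ' φ i x
      = covD lam Γ φ i x - lam * (((n:ℝ)+1) * ω i x) * φ x := by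
    intro i; simp only [covD, htr]; ring
  have h1 : (∑ i, T i x * covD lam Γ' φ i x)
      = (∑ i, T i x * covD lam Γ φ i x)
        - lam * ((n:ℝ)+1) * ((∑ i, ω i x * T i x) * φ x) := by
    simp only [hcd, mul_sub, Finset.sum_sub_distrib]
    congr 1
    rw [Finset.sum_mul, Finset.mul_sum]
    exact Finset.sum_congr rfl (fun i _ => by ring)
  have hc : ∀ i : Fin n, covDV d Γ' T i i x
      = covDV d Γ T i i x + (∑ l, ω l x * T l x)
        + (1 - d * ((n:ℝ)+1)) * (ω i x * T i x) := by
    intro i; simp only [covDV, htr, hΓ'sum]; ring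
  have h2 : (∑ i, covDV d Γ' T i i x)
      = (∑ i, covDV d Γ T i i x) + ((n:ℝ)+1) * (1 - d) * (∑ i, ω i x * T i x) := by
    simp only [hc, Finset.sum_add_distrib, Finset.sum_const, Finset.card_univ,
      Fintype.card_fin, nsmul_eq_mul, ← Finset.mul_sum]
    ring
  simp only [Q1, h1, h2]
  ring
end
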